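/- For every output bin j, the expected calibration deviation satisfies E[|o_j − e_j|] ≤ k_j·√(2πB/N) (equivalently, since N = nB, E[|o_j − e_j|] ≤ k_j·√(2π/n)). -/

import Mathlib

/-!
A weighted average moves by at most the sum of the moves of the averaged values, so it
suffices to bound `E|θ_t - θ̂_t|` for a single input bin. There `θ̂_t` is the mean of `n`
independent variables with values in `[0, 1]`, each of variance at most `1/4` (Popoviciu), so
`E|θ_t - θ̂_t| ≤ √(Var θ̂_t) ≤ 1/(2√n)`, which is below `√(2π/n)`.
-/

open MeasureTheory ProbabilityTheory Finset

/-- Empirical estimate of input bin `t`: the average of the `n` samples in that bin. -/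
noncomputable def binEst {Ω : Type*} {B n : ℕ} (X : Fin B × Fin n → Ω → ℝ)
    (t : Fin B) (ω : Ω) : ℝ :=
  (n : ℝ)⁻¹ * ∑ s : Fin n, X (t, s) ω

/-- Weighted average of the values `v t` over the input bins mapped to output bin `j`. -/
noncomputable def binAvg {B J : ℕ} (g : Fin B → Fin J) (α : Fin B → ℝ)
    (v : Fin B → ℝ) (j : Fin J) : ℝ :=
  (∑ t ∈ univ.filter (fun t => g t = j), α t * v t) /
    (∑ t ∈ univ.filter (fun t => g t = j), α t)

theorem abs_binAvg_sub_binAvg_le {B J : ℕ} (g : Fin B → Fin J) {α : Fin B → ℝ}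
    (hα : ∀ t, 0 ≤ α t) (u v : Fin B → ℝ) (j : Fin J) :
    |binAvg g α u j - binAvg g α v j| ≤ ∑ t ∈ univ.filter (fun t => g t = j), |u t - v t| := by
  set S := univ.filter (fun t => g t = j)
  have hαS : 0 ≤ ∑ t ∈ S, α t := sum_nonneg fun t _ => hα t
  have hdiff : binAvg g α u j - binAvg g α v j
      = (∑ t ∈ S, α t * (u t - v t)) / ∑ t ∈ S, α t := by
    simp only [binAvg, div_sub_div_same, ← sum_sub_distrib, mul_sub, S]
  rw [hdiff, abs_div, abs_of_nonneg hαS]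
  refine div_le_of_le_mul₀ hαS (sum_nonneg fun t _ => abs_nonneg _) ?_
  calc |∑ t ∈ S, α t * (u t - v t)|
      ≤ ∑ t ∈ S, α t * |u t - v t| := by
        refine (abs_sum_le_sum_abs _ S).trans_eq (sum_congr rfl fun t _ => ?_)
        rw [abs_mul, abs_of_nonneg (hα t)]
    _ ≤ ∑ t ∈ S, (∑ t' ∈ S, α t') * |u t - v t| :=
        sum_le_sum fun t ht => mul_le_mul_of_nonneg_right
          (single_le_sum (fun t' _ => hα t') ht) (abs_nonneg _)
    _ = (∑ t ∈ S, |u t - v t|) * ∑ t ∈ S, α t := by rw [← mul_sum, mul_comm]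

noncomputable def sampleMean {Ω : Type*} {n : ℕ} (Z : Fin n → Ω → ℝ) (ω : Ω) : ℝ :=
  (n : ℝ)⁻¹ * ∑ i, Z i ω

theorem binEst_eq_sampleMean {Ω : Type*} {B n : ℕ} (X : Fin B × Fin n → Ω → ℝ) (t : Fin B) :
    binEst X t = sampleMean fun s => X (t, s) := rfl

section SampleMean

variable {Ω : Type*} [MeasurableSpace Ω] {μ : Measure Ω}

theorem memLp_sampleMean {n : ℕ} {Z : Fin n → Ω → ℝ} {p : ENNReal} (hZ : ∀ i, MemLp (Z i) p μ) :
    MemLp (sampleMean Z) p μ :=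
  (memLp_finsetSum univ fun i _ => hZ i).const_mul _

theorem integral_sampleMean {n : ℕ} (hn : n ≠ 0) {Z : Fin n → Ω → ℝ}
    (hZ : ∀ i, Integrable (Z i) μ) {m : ℝ} (hm : ∀ i, μ[Z i] = m) :
    μ[sampleMean Z] = m := by
  simp only [sampleMean, integral_const_mul, integral_finsetSum univ fun i _ => hZ i, hm,
    sum_const, card_univ, Fintype.card_fin, nsmul_eq_mul]
  field_simp

theorem variance_sampleMean_le [IsProbabilityMeasure μ] {n : ℕ} {Z : Fin n → Ω → ℝ}
    (hZ : ∀ i ω, Z i ω ∈ Set.Icc (0 : ℝ) 1) (hmeas : ∀ i, Measurable (Z i))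
    (hindep : Pairwise fun i j => IndepFun (Z i) (Z j) μ) :
    Var[sampleMean Z; μ] ≤ (4 * n : ℝ)⁻¹ := by
  have hL2 : ∀ i, MemLp (Z i) 2 μ := fun i =>
    memLp_of_bounded (ae_of_all _ (hZ i)) (hmeas i).aestronglyMeasurable 2
  have hsum : Var[∑ i, Z i; μ] ≤ n * 4⁻¹ := by
    rw [IndepFun.variance_sum (fun i _ => hL2 i) fun i _ j _ hij => hindep hij]
    calc ∑ i, Var[Z i; μ] ≤ ∑ _i : Fin n, ((1 - 0) / 2 : ℝ) ^ 2 :=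
          sum_le_sum fun i _ => variance_le_sq_of_bounded (ae_of_all _ (hZ i))
            (hmeas i).aemeasurable
      _ = n * 4⁻¹ := by norm_num
  have hsm : sampleMean Z = fun ω => (n : ℝ)⁻¹ * (∑ i, Z i) ω := by
    ext ω; simp [sampleMean]
  rw [hsm, variance_const_mul]
  rcases eq_or_ne (n : ℝ) 0 with h0 | h0
  · simp [h0]
  calc (n : ℝ)⁻¹ ^ 2 * Var[∑ i, Z i; μ] ≤ (n : ℝ)⁻¹ ^ 2 * (n * 4⁻¹) := by gcongr
    _ = (4 * n : ℝ)⁻¹ := by field_simp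

theorem integral_abs_sub_integral_le_sqrt_variance [IsProbabilityMeasure μ] {Y : Ω → ℝ}
    (hY : MemLp Y 2 μ) : ∫ ω, |Y ω - μ[Y]| ∂μ ≤ √(Var[Y; μ]) := by
  set D := fun ω => |Y ω - μ[Y]|
  have hD : MemLp D 2 μ := by exact (hY.sub (memLp_const _)).abs
  have hD2 : μ[D ^ 2] = Var[Y; μ] := by
    simp [D, sq_abs, variance_eq_integral hY.aemeasurable]
  have hvar := variance_nonneg D μ
  rw [variance_eq_sub hD, hD2] at hvar
  exact Real.le_sqrt_of_sq_le (by linarith)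

theorem integral_abs_sub_sampleMean_le [IsProbabilityMeasure μ] {n : ℕ} (hn : n ≠ 0)
    {Z : Fin n → Ω → ℝ} (hZ : ∀ i ω, Z i ω ∈ Set.Icc (0 : ℝ) 1) (hmeas : ∀ i, Measurable (Z i))
    (hindep : Pairwise fun i j => IndepFun (Z i) (Z j) μ) {m : ℝ} (hm : ∀ i, μ[Z i] = m) :
    ∫ ω, |m - sampleMean Z ω| ∂μ ≤ √((4 * n : ℝ)⁻¹) := by
  have hL2 : ∀ i, MemLp (Z i) 2 μ := fun i =>
    memLp_of_bounded (ae_of_all _ (hZ i)) (hmeas i).aestronglyMeasurable 2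
  have hmean : μ[sampleMean Z] = m :=
    integral_sampleMean hn (fun i => (hL2 i).integrable one_le_two) hm
  simp_rw [← hmean, abs_sub_comm μ[sampleMean Z]]
  exact (integral_abs_sub_integral_le_sqrt_variance (memLp_sampleMean hL2)).trans
    (Real.sqrt_le_sqrt (variance_sampleMean_le hZ hmeas hindep))

end SampleMean

theorem expected_output_bin_deviation_general
    {Ω : Type*} [MeasurableSpace Ω] (μ : Measure Ω) [IsProbabilityMeasure μ]
    (B n : ℕ) (hn : 1 ≤ n)
    (θ : Fin B → ℝ)
    (X : Fin B × Fin n → Ω → ℝ)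
    (hX01 : ∀ p ω, X p ω = 0 ∨ X p ω = 1)
    (hXmeas : ∀ p, Measurable (X p))
    (hindep : iIndepFun X μ)
    (hmean : ∀ t s, ∫ ω, X (t, s) ω ∂μ = θ t)
    (J : ℕ) (g : Fin B → Fin J)
    (α : Fin B → ℝ) (hα : ∀ t, 0 < α t)
    (j : Fin J) :
    ∫ ω, |binAvg g α θ j - binAvg g α (fun t => binEst X t ω) j| ∂μ
      ≤ ((univ.filter (fun t => g t = j)).card : ℝ) *
          Real.sqrt (2 * Real.pi * B / (n * B : ℝ)) := by
  have hX : ∀ p ω, X p ω ∈ Set.Icc (0 : ℝ) 1 := fun p ω => by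
    rcases hX01 p ω with h | h <;> simp [h]
  have hpair : ∀ t, Pairwise fun s s' => IndepFun (X (t, s)) (X (t, s')) μ :=
    fun t s s' hss' => hindep.indepFun (by simpa using hss')
  have hL2 : ∀ p, MemLp (X p) 2 μ := fun p =>
    memLp_of_bounded (ae_of_all _ (hX p)) (hXmeas p).aestronglyMeasurable 2
  have hint : ∀ t, Integrable (fun ω => |θ t - binEst X t ω|) μ := fun t =>
    ((integrable_const _).sub ((memLp_sampleMean fun s => hL2 (t, s)).integrable one_le_two)).abs
  have hbin : ∀ t, ∫ ω, |θ t - binEst X t ω| ∂μ ≤ √(2 * Real.pi * B / (n * B)) := fun t => by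
    -- `t : Fin B` forces `B ≠ 0`, so the factor `B` cancels
    rw [mul_div_mul_right _ _ (Nat.cast_ne_zero.mpr t.pos.ne'), binEst_eq_sampleMean]
    refine (integral_abs_sub_sampleMean_le (by omega) (fun s => hX (t, s)) (fun s => hXmeas _)
      (hpair t) (hmean t)).trans (Real.sqrt_le_sqrt ?_)
    rw [mul_comm, mul_inv, ← div_eq_inv_mul]
    gcongr
    linarith [Real.pi_gt_three]
  calc ∫ ω, |binAvg g α θ j - binAvg g α (fun t => binEst X t ω) j| ∂μ
      ≤ ∫ ω, ∑ t ∈ univ.filter (fun t => g t = j), |θ t - binEst X t ω| ∂μ :=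
        integral_mono_of_nonneg (ae_of_all _ fun _ => abs_nonneg _)
          (integrable_finsetSum _ fun t _ => hint t)
          (ae_of_all _ fun ω => abs_binAvg_sub_binAvg_le g (fun t => (hα t).le) _ _ j)
    _ = ∑ t ∈ univ.filter (fun t => g t = j), ∫ ω, |θ t - binEst X t ω| ∂μ :=
        integral_finsetSum _ fun t _ => hint t
    _ ≤ _ := by
        simpa only [sum_const, nsmul_eq_mul] using sum_le_sum fun t _ => hbin t

/-- **Expected per-output-bin calibration deviation**: for every output bin `j`,
`E[|o_j − e_j|] ≤ k_j·√(2πB/N) = k_j·√(2π/n)`, where `k_j` is the number of input bins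
mapped into output bin `j` and `N = nB`. -/
theorem expected_output_bin_deviation
    {Ω : Type*} [MeasurableSpace Ω] (μ : Measure Ω) [IsProbabilityMeasure μ]
    (B n : ℕ) (hB : 1 ≤ B) (hn : 1 ≤ n)
    (θ : Fin B → ℝ) (hθ : ∀ t, θ t ∈ Set.Icc (0 : ℝ) 1)
    (X : Fin B × Fin n → Ω → ℝ)
    (hX01 : ∀ p ω, X p ω = 0 ∨ X p ω = 1)
    (hXmeas : ∀ p, Measurable (X p))
    (hindep : iIndepFun X μ)
    (hmean : ∀ t s, ∫ ω, X (t, s) ω ∂μ = θ t)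
    (J : ℕ) (g : Fin B → Fin J) (hg : Function.Surjective g)
    (α : Fin B → ℝ) (hα : ∀ t, 0 < α t)
    (j : Fin J) :
    ∫ ω, |binAvg g α θ j - binAvg g α (fun t => binEst X t ω) j| ∂μ
      ≤ ((univ.filter (fun t => g t = j)).card : ℝ) *
          Real.sqrt (2 * Real.pi * B / (n * B : ℝ)) :=
  expected_output_bin_deviation_general μ B n hn θ X hX01 hXmeas hindep hmean J g α hα j
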